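/- arXiv:2410.14618 — 3 statements merged into one kernel-verified Lean document; each statement's English description precedes it below -/
import Mathlib

section
/- Suppose real sequences (f₊ₖ)ₖ≥0 and (f₋ₖ)ₖ≥0 satisfy, for all k ≥ 1: (i) -(γ₊₋ - 1)f₊ₖ + γ₋₊ f₋ₖ = (k+1)f₊,ₖ₊₁ − k f₊ₖ and (ii) -(γ₋₊ - 1)f₋ₖ + γ₊₋ f₊ₖ = −k f₋ₖ, where γ₋₊ > 0 is not an integer and γ₊₋ > 0. Then for every k ≥ 1, f₊ₖ = f₊₀ · ∏_{i=0}^{k-1} [ (i − γ₊₋ + 1 + γ₋₊γ₊₋/(γ₋₊ − 1 − i)) / (i+1) ], together with the initial relations f₊₁ = -(γ₊₋ -1)f₊₀ + γ₋₊ f₋₀ and 0 = -(γ₋₊ - 1)f₋₀ + γ₊₋ f₊₀. In particular, the two sequences are uniquely determined by f₊₀. -/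
/-!
Equation (ii) at index `k` expresses `f₋ₖ` through `f₊ₖ` (the coefficient `γ₋₊ - 1 - k` is nonzero
because `γ₋₊` is not an integer); substituting this into (i) gives the one-term recursion
`f₊,ₖ₊₁ = f₊ₖ · rₖ`. The initial relations are (i) and (ii) at `k = 0`, so the recursion holds
from `k = 0` on and telescopes into the product.
-/

lemma eq_mul_prod_range_of_succ_eq_mul {M : Type*} [CommMonoid M] {f g : ℕ → M}
    (h : ∀ k, f (k + 1) = f k * g k) (n : ℕ) :
    f n = f 0 * ∏ i ∈ Finset.range n, g i := by
  induction n with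
  | zero => simp
  | succ n ih => rw [h, ih, Finset.prod_range_succ, mul_assoc]

lemma sub_one_sub_natCast_ne_zero {γ : ℝ} (h : ∀ m : ℤ, γ ≠ m) (k : ℕ) : γ - 1 - k ≠ 0 := by
  intro hk
  exact h (k + 1) (by push_cast; linarith)

lemma succ_eq_mul_of_coupled_recursion {a b x x' y : ℝ} {k : ℕ} (hne : a - 1 - k ≠ 0)
    (hi : -(b - 1) * x + a * y = (k + 1 : ℝ) * x' - (k : ℝ) * x)
    (hii : -(a - 1) * y + b * x = -(k : ℝ) * y) :
    x' = x * ((k - b + 1 + a * b / (a - 1 - k)) / (k + 1)) := by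
  have hy : y = b * x / (a - 1 - k) := by
    field_simp
    linarith
  have hk : (k : ℝ) + 1 ≠ 0 := by positivity
  rw [hy] at hi
  field_simp at hi ⊢
  linarith

theorem stmt_9_general (γmp γpm : ℝ)
    (hnotint : ∀ m : ℤ, γmp ≠ m)
    (fp fm : ℕ → ℝ)
    (hinit1 : fp 1 = -(γpm - 1) * fp 0 + γmp * fm 0)
    (hinit2 : 0 = -(γmp - 1) * fm 0 + γpm * fp 0)
    (hrec : ∀ k : ℕ, 1 ≤ k →
      -(γpm - 1) * fp k + γmp * fm k = (k + 1 : ℝ) * fp (k + 1) - (k : ℝ) * fp k ∧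
      -(γmp - 1) * fm k + γpm * fp k = -(k : ℝ) * fm k) :
    ∀ k : ℕ, 1 ≤ k →
      fp k = fp 0 *
        ∏ i ∈ Finset.range k,
          ((i - γpm + 1 + γmp * γpm / (γmp - 1 - i)) / (i + 1) : ℝ) := by
  have hstep : ∀ k : ℕ, fp (k + 1) =
      fp k * ((k - γpm + 1 + γmp * γpm / (γmp - 1 - k)) / (k + 1)) := by
    intro k
    rcases Nat.eq_zero_or_pos k with rfl | hk
    · exact succ_eq_mul_of_coupled_recursion (sub_one_sub_natCast_ne_zero hnotint 0)
        (by simpa using hinit1.symm) (by simpa using hinit2.symm)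
    · obtain ⟨hi, hii⟩ := hrec k hk
      exact succ_eq_mul_of_coupled_recursion (sub_one_sub_natCast_ne_zero hnotint k) hi hii
  intro k _
  exact eq_mul_prod_range_of_succ_eq_mul hstep k

theorem stmt_9 (γmp γpm : ℝ) (hmp : 0 < γmp) (hpm : 0 < γpm)
    (hnotint : ∀ m : ℤ, γmp ≠ m)
    (fp fm : ℕ → ℝ)
    (hinit1 : fp 1 = -(γpm - 1) * fp 0 + γmp * fm 0)
    (hinit2 : 0 = -(γmp - 1) * fm 0 + γpm * fp 0)
    (hrec : ∀ k : ℕ, 1 ≤ k →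
      -(γpm - 1) * fp k + γmp * fm k = (k + 1 : ℝ) * fp (k + 1) - (k : ℝ) * fp k ∧
      -(γmp - 1) * fm k + γpm * fp k = -(k : ℝ) * fm k) :
    ∀ k : ℕ, 1 ≤ k →
      fp k = fp 0 *
        ∏ i ∈ Finset.range k,
          ((i - γpm + 1 + γmp * γpm / (γmp - 1 - i)) / (i + 1) : ℝ) :=
  stmt_9_general γmp γpm hnotint fp fm hinit1 hinit2 hrec
end

section
/- Let T > 0, Δ > 0 with T/Δ a positive integer, and a₁, a₂ > 0. Suppose nonnegative sequences (dV(i))_{i=0}^{T/Δ} and (dE(i))_{i=0}^{T/Δ} satisfy dV(0) = dE(0) = 0 and, for all i, dE(i+1) − dE(i) ≤ a₁ dV(i) Δ n + a₂ n² Δ² and dV(i+1) − dV(i) ≤ a₁ dE(i) Δ / n + a₂ n Δ², where n > 0. Then for all i = 0, …, T/Δ: dV(i) ≤ n a₂ Δ² Σ_{k=1}^{i} (a₁Δ)^{k-1} C(i,k) and dE(i) ≤ n² a₂ Δ² Σ_{k=1}^{i} (a₁Δ)^{k-1} C(i,k), where C(i,k) denotes the binomial coefficient. -/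
lemma sum_choose_closed (x : ℝ) (hx : x ≠ 0) (i : ℕ) :
    ∑ k ∈ Finset.Icc 1 i, x ^ (k - 1) * (i.choose k : ℝ) = ((1 + x) ^ i - 1) / x := by
  rw [eq_div_iff hx]
  have h1 : (∑ k ∈ Finset.Icc 1 i, x ^ (k - 1) * (i.choose k : ℝ)) * x
      = ∑ k ∈ Finset.Icc 1 i, x ^ k * (i.choose k : ℝ) := by
    rw [Finset.sum_mul]
    refine Finset.sum_congr rfl fun k hk => ?_
    have hk1 : 1 ≤ k := (Finset.mem_Icc.mp hk).1
    rw [mul_right_comm, ← pow_succ, Nat.sub_add_cancel hk1]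
  rw [h1]
  have h2 : (1 + x) ^ i = ∑ k ∈ Finset.range (i + 1), x ^ k * (i.choose k : ℝ) := by
    rw [add_comm, add_pow]
    refine Finset.sum_congr rfl fun k _ => ?_
    ring
  have h3 : Finset.range (i + 1) = insert 0 (Finset.Icc 1 i) := by
    ext k
    simp [Nat.lt_succ_iff, Nat.one_le_iff_ne_zero]
    omega
  rw [h2, h3, Finset.sum_insert (by simp)]
  simp

theorem stmt_11 (T Δ n a₁ a₂ : ℝ) (hT : 0 < T) (hΔ : 0 < Δ) (hn : 0 < n)
    (ha₁ : 0 < a₁) (ha₂ : 0 < a₂)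
    (m : ℕ) (hm : 0 < m) (hmTΔ : (m : ℝ) = T / Δ)
    (dV dE : ℕ → ℝ)
    (hVnn : ∀ i, 0 ≤ dV i) (hEnn : ∀ i, 0 ≤ dE i)
    (hV0 : dV 0 = 0) (hE0 : dE 0 = 0)
    (hEstep : ∀ i < m, dE (i + 1) - dE i ≤ a₁ * dV i * Δ * n + a₂ * n ^ 2 * Δ ^ 2)
    (hVstep : ∀ i < m, dV (i + 1) - dV i ≤ a₁ * dE i * Δ / n + a₂ * n * Δ ^ 2) :
    ∀ i ≤ m,
      dV i ≤ n * a₂ * Δ ^ 2 *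
        ∑ k ∈ Finset.Icc 1 i, (a₁ * Δ) ^ (k - 1) * (i.choose k : ℝ) ∧
      dE i ≤ n ^ 2 * a₂ * Δ ^ 2 *
        ∑ k ∈ Finset.Icc 1 i, (a₁ * Δ) ^ (k - 1) * (i.choose k : ℝ) := by
  set x := a₁ * Δ with hxdef
  have hx : 0 < x := mul_pos ha₁ hΔ
  have key : ∀ i ≤ m, dV i ≤ n * a₂ * Δ ^ 2 * (((1 + x) ^ i - 1) / x) ∧
      dE i ≤ n ^ 2 * a₂ * Δ ^ 2 * (((1 + x) ^ i - 1) / x) := by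
    intro i
    induction i with
    | zero => intro _; simp [hV0, hE0]
    | succ j ih =>
      intro hji
      have hjm : j < m := hji
      obtain ⟨hV, hE⟩ := ih (le_of_lt hjm)
      have hEs := hEstep j hjm
      have hVs := hVstep j hjm
      have hrec : ((1 + x) ^ (j + 1) - 1) / x = (1 + x) * (((1 + x) ^ j - 1) / x) + 1 := by
        field_simp
        ring
      constructor
      · rw [hrec]
        have h1 : dV (j + 1) ≤ dV j + a₁ * dE j * Δ / n + a₂ * n * Δ ^ 2 := by linarith
        have h2 : a₁ * dE j * Δ / n ≤ a₁ * (n ^ 2 * a₂ * Δ ^ 2 * (((1 + x) ^ j - 1) / x)) * Δ / n := by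
          gcongr
        calc dV (j + 1) ≤ dV j + a₁ * dE j * Δ / n + a₂ * n * Δ ^ 2 := h1
          _ ≤ n * a₂ * Δ ^ 2 * (((1 + x) ^ j - 1) / x)
              + a₁ * (n ^ 2 * a₂ * Δ ^ 2 * (((1 + x) ^ j - 1) / x)) * Δ / n
              + a₂ * n * Δ ^ 2 := by linarith
          _ = n * a₂ * Δ ^ 2 * ((1 + x) * (((1 + x) ^ j - 1) / x) + 1) := by
              field_simp
              ring
      · rw [hrec]
        have h1 : dE (j + 1) ≤ dE j + a₁ * dV j * Δ * n + a₂ * n ^ 2 * Δ ^ 2 := by linarith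
        have h2 : a₁ * dV j * Δ * n ≤ a₁ * (n * a₂ * Δ ^ 2 * (((1 + x) ^ j - 1) / x)) * Δ * n := by
          gcongr
        calc dE (j + 1) ≤ dE j + a₁ * dV j * Δ * n + a₂ * n ^ 2 * Δ ^ 2 := h1
          _ ≤ n ^ 2 * a₂ * Δ ^ 2 * (((1 + x) ^ j - 1) / x)
              + a₁ * (n * a₂ * Δ ^ 2 * (((1 + x) ^ j - 1) / x)) * Δ * n
              + a₂ * n ^ 2 * Δ ^ 2 := by linarith
          _ = n ^ 2 * a₂ * Δ ^ 2 * ((1 + x) * (((1 + x) ^ j - 1) / x) + 1) := by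
              field_simp
              ring
  intro i hi
  rw [sum_choose_closed x (ne_of_gt hx)]
  exact key i hi
end

section
/- Let β > 0, p₊ ∈ (0,1), and define f₊(u) = u·u^{βp₊−1}(1−u)^{β(1−p₊)−1}, f₋(u) = (1−u)·u^{βp₊−1}(1−u)^{β(1−p₊)−1} on (0,1). Then for all u ∈ (0,1): (1−u)f₊'(u) = −(β(1−p₊) − 1)f₊(u) + βp₊ f₋(u) and −u f₋'(u) = −(βp₊ − 1)f₋(u) + β(1−p₊) f₊(u). That is, the pair (f₊, f₋) given by the Beta(βp₊, β(1−p₊))-weighted densities is a stationary solution of the two-way feedback voter model PDE system when the switching probability α is constant equal to p₊. -/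
/-! With `w(u) = u^(a-1) (1-u)^(b-1)` and `a = β p₊`, `b = β (1 - p₊)`, the logarithmic derivative
`w'/w = (a-1)/u - (b-1)/(1-u)` turns both identities, after the product rule, into polynomial
identities in `u`. -/

lemma hasDerivAt_rpow_mul_one_sub_rpow (a b : ℝ) {u : ℝ} (h0 : 0 < u) (h1 : u < 1) :
    HasDerivAt (fun x : ℝ => x ^ a * (1 - x) ^ b)
      (u ^ a * (1 - u) ^ b * (a / u - b / (1 - u))) u := by
  have h1' : 0 < 1 - u := sub_pos.mpr h1
  have hA : HasDerivAt (fun x : ℝ => x ^ a) (a * u ^ (a - 1)) u :=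
    Real.hasDerivAt_rpow_const (Or.inl h0.ne')
  have hB : HasDerivAt (fun x : ℝ => (1 - x) ^ b) (b * (1 - u) ^ (b - 1) * -1) u :=
    (Real.hasDerivAt_rpow_const (Or.inl h1'.ne')).comp u ((hasDerivAt_id u).const_sub 1)
  refine (hA.mul hB).congr_deriv ?_
  rw [Real.rpow_sub_one h0.ne', Real.rpow_sub_one h1'.ne']
  field_simp
  ring

section BetaWeight

variable (a b : ℝ) {u : ℝ}

lemma one_sub_mul_deriv_mul_betaWeight (h0 : 0 < u) (h1 : u < 1) :
    (1 - u) * deriv (fun x : ℝ => x * (x ^ (a - 1) * (1 - x) ^ (b - 1))) u =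
      -(b - 1) * (u * (u ^ (a - 1) * (1 - u) ^ (b - 1)))
        + a * ((1 - u) * (u ^ (a - 1) * (1 - u) ^ (b - 1))) := by
  have h1' : 0 < 1 - u := sub_pos.mpr h1
  have hd : HasDerivAt (fun x : ℝ => x * (x ^ (a - 1) * (1 - x) ^ (b - 1))) _ u :=
    (hasDerivAt_id' u).mul (hasDerivAt_rpow_mul_one_sub_rpow (a - 1) (b - 1) h0 h1)
  rw [hd.deriv]
  field_simp
  ring

lemma neg_mul_deriv_one_sub_mul_betaWeight (h0 : 0 < u) (h1 : u < 1) :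
    -u * deriv (fun x : ℝ => (1 - x) * (x ^ (a - 1) * (1 - x) ^ (b - 1))) u =
      -(a - 1) * ((1 - u) * (u ^ (a - 1) * (1 - u) ^ (b - 1)))
        + b * (u * (u ^ (a - 1) * (1 - u) ^ (b - 1))) := by
  have h1' : 0 < 1 - u := sub_pos.mpr h1
  have hd : HasDerivAt (fun x : ℝ => (1 - x) * (x ^ (a - 1) * (1 - x) ^ (b - 1))) _ u :=
    ((hasDerivAt_id' u).const_sub 1).mul (hasDerivAt_rpow_mul_one_sub_rpow (a - 1) (b - 1) h0 h1)
  rw [hd.deriv]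
  field_simp
  ring

end BetaWeight

theorem stmt_14_general (β pplus : ℝ)
    (fp fm : ℝ → ℝ)
    (hfp : ∀ u, fp u = u * (u ^ (β * pplus - 1) * (1 - u) ^ (β * (1 - pplus) - 1)))
    (hfm : ∀ u, fm u = (1 - u) * (u ^ (β * pplus - 1) * (1 - u) ^ (β * (1 - pplus) - 1))) :
    ∀ u ∈ Set.Ioo (0 : ℝ) 1,
      (1 - u) * deriv fp u = -(β * (1 - pplus) - 1) * fp u + β * pplus * fm u ∧
      -u * deriv fm u = -(β * pplus - 1) * fm u + β * (1 - pplus) * fp u := by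
  rintro u ⟨h0, h1⟩
  obtain rfl : fp = _ := funext hfp
  obtain rfl : fm = _ := funext hfm
  exact ⟨one_sub_mul_deriv_mul_betaWeight _ _ h0 h1,
    neg_mul_deriv_one_sub_mul_betaWeight _ _ h0 h1⟩

theorem stmt_14 (β pplus : ℝ) (hβ : 0 < β) (hp : pplus ∈ Set.Ioo (0 : ℝ) 1)
    (fp fm : ℝ → ℝ)
    (hfp : ∀ u, fp u = u * (u ^ (β * pplus - 1) * (1 - u) ^ (β * (1 - pplus) - 1)))
    (hfm : ∀ u, fm u = (1 - u) * (u ^ (β * pplus - 1) * (1 - u) ^ (β * (1 - pplus) - 1))) :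
    ∀ u ∈ Set.Ioo (0 : ℝ) 1,
      (1 - u) * deriv fp u = -(β * (1 - pplus) - 1) * fp u + β * pplus * fm u ∧
      -u * deriv fm u = -(β * pplus - 1) * fm u + β * (1 - pplus) * fp u :=
  stmt_14_general β pplus fp fm hfp hfm
end
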